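/- arXiv:1406.0690 — 4 statements merged into one kernel-verified Lean document; each statement's English description precedes it below -/
import Mathlib

section
/- Let Σ be a finite alphabet with k letters, let U_Σ = {x ∈ Σ* | every letter of Σ occurs in x} and V_Σ = {x ∈ Σ* | no letter occurs twice in x}. Then nN(U_Σ) = nD(U_Σ) = 2^k and nN(V_Σ) = nD(V_Σ) = 2^k; that is, each of U_Σ and V_Σ is recognized by a DFA with 2^k states, and every NFA recognizing U_Σ (respectively V_Σ) has at least 2^k states. -/
/-- An accepting run of an NFA on a word `w`: a sequence of `|w|+1` states starting
in an initial state, ending in an accepting state, and following the transitions. -/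
def NFA.IsAcceptingRun {α σ : Type*} (M : NFA α σ) (w : List α)
    (r : Fin (w.length + 1) → σ) : Prop :=
  r 0 ∈ M.start ∧ r (Fin.last w.length) ∈ M.accept ∧
    ∀ i : Fin w.length, r i.succ ∈ M.step (r i.castSucc) (w.get i)

/-- An NFA is unambiguous (a UFA) if every word has at most one accepting run. -/
def NFA.Unambiguous {α σ : Type*} (M : NFA α σ) : Prop :=
  ∀ (w : List α) (r₁ r₂ : Fin (w.length + 1) → σ),
    M.IsAcceptingRun w r₁ → M.IsAcceptingRun w r₂ → r₁ = r₂

/-- A deterministic NFA (a DFA with a possibly partial transition function):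
exactly one initial state and at most one successor per state and letter. -/
def NFA.Deterministic {α σ : Type*} (M : NFA α σ) : Prop :=
  (∃ q₀, M.start = {q₀}) ∧ ∀ q a, (M.step q a).Subsingleton

/-- Minimal number of states of an NFA recognizing `L` (`nN(L)`). -/
noncomputable def nN {α : Type} (L : Language α) : ℕ :=
  sInf {n | ∃ (σ : Type) (inst : Fintype σ) (M : NFA α σ),
    @Fintype.card σ inst = n ∧ M.accepts = L}

/-- Minimal number of states of a DFA (partial transition function allowed)
recognizing `L` (`nD(L)`). -/
noncomputable def nD {α : Type} (L : Language α) : ℕ :=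
  sInf {n | ∃ (σ : Type) (inst : Fintype σ) (M : NFA α σ),
    M.Deterministic ∧ @Fintype.card σ inst = n ∧ M.accepts = L}

/-- Minimal number of states of an unambiguous NFA recognizing `L` (`nU(L)`). -/
noncomputable def nU {α : Type} (L : Language α) : ℕ :=
  sInf {n | ∃ (σ : Type) (inst : Fintype σ) (M : NFA α σ),
    M.Unambiguous ∧ @Fintype.card σ inst = n ∧ M.accepts = L}

/-- Upward closure: all superwords (w.r.t. the scattered-subword ordering
`List.Sublist`) of words of `L`. -/
def upClosure {α : Type} (L : Language α) : Language α := {x | ∃ y ∈ L, y.Sublist x}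

/-- Downward closure: all subwords of words of `L`. -/
def downClosure {α : Type} (L : Language α) : Language α := {x | ∃ y ∈ L, x.Sublist y}

/-- Upward interior: words all of whose superwords are in `L`. -/
def upInterior {α : Type} (L : Language α) : Language α := {x | ∀ y, x.Sublist y → y ∈ L}

/-- Downward interior: words all of whose subwords are in `L`. -/
def downInterior {α : Type} (L : Language α) : Language α := {x | ∀ y, y.Sublist x → y ∈ L}

/-! Both languages are decided by remembering the set of letters read so far, which takes
`2 ^ k` states, deterministically. Conversely, indexing by subsets `S`, the words `Sᶜ.toList` and
`S.toList` (for `U`), resp. `S.toList` and `Sᶜ.toList` (for `V`), concatenate into the language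
exactly when the first index is contained in the second; so the subsets form a fooling set and any
NFA needs one state per subset. -/

namespace NFA

variable {α σ : Type}

theorem acceptsFrom_empty (M : NFA α σ) : M.acceptsFrom ∅ = 0 := by
  ext w
  simp only [mem_acceptsFrom, evalFrom_eq_biUnion_singleton _ ∅]
  simp

theorem mem_acceptsFrom_iff_exists {M : NFA α σ} {S : Set σ} {w : List α} :
    w ∈ M.acceptsFrom S ↔ ∃ q ∈ S, w ∈ M.acceptsFrom {q} := by
  simp only [mem_acceptsFrom, evalFrom_eq_biUnion_singleton _ S, Set.mem_iUnion₂]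
  tauto

theorem append_mem_accepts_iff {M : NFA α σ} {x y : List α} :
    x ++ y ∈ M.accepts ↔ ∃ q ∈ M.eval x, y ∈ M.acceptsFrom {q} := by
  rw [accepts_eq_acceptsFrom_start, append_mem_acceptsFrom, mem_acceptsFrom_iff_exists]
  rfl

end NFA

theorem DFA.toNFA_deterministic {α σ : Type} (M : DFA α σ) : M.toNFA.Deterministic :=
  ⟨⟨M.start, rfl⟩, fun _ _ => Set.subsingleton_singleton⟩

def Language.IsFoolingSet {α ι : Type} (L : Language α) (x y : ι → List α) : Prop :=
  (∀ i, x i ++ y i ∈ L) ∧ ∀ i j, i ≠ j → x i ++ y j ∉ L ∨ x j ++ y i ∉ L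

theorem Language.isFoolingSet_of_append_mem_iff_le {α ι : Type} [PartialOrder ι]
    {L : Language α} {x y : ι → List α} (h : ∀ i j, x i ++ y j ∈ L ↔ i ≤ j) :
    L.IsFoolingSet x y := by
  refine ⟨fun i => (h i i).2 le_rfl, fun i j hij => ?_⟩
  rw [h, h, ← not_and_or]
  exact fun ⟨hle, hge⟩ => hij (le_antisymm hle hge)

/-- A state reached by `x i` from which `y i` is accepted determines `i`. -/
theorem NFA.card_le_of_isFoolingSet {α σ ι : Type} [Fintype σ] [Fintype ι] {L : Language α}
    {x y : ι → List α} (hL : L.IsFoolingSet x y) (M : NFA α σ) (hM : M.accepts = L) :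
    Fintype.card ι ≤ Fintype.card σ := by
  subst hM
  choose q hqx hqy using fun i => append_mem_accepts_iff.1 (hL.1 i)
  refine Fintype.card_le_of_injective q fun i j hij => by_contra fun hne => ?_
  rcases hL.2 i j hne with h | h
  · exact h (append_mem_accepts_iff.2 ⟨q i, hqx i, hij ▸ hqy j⟩)
  · exact h (append_mem_accepts_iff.2 ⟨q j, hqx j, hij ▸ hqy i⟩)

theorem nN_eq_and_nD_eq_of_deterministic {α σ : Type} [Fintype σ] {L : Language α} {n : ℕ}
    (M : NFA α σ) (hdet : M.Deterministic) (hM : M.accepts = L) (hcard : Fintype.card σ = n)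
    (hle : ∀ (τ : Type) [Fintype τ] (N : NFA α τ), N.accepts = L → n ≤ Fintype.card τ) :
    nN L = n ∧ nD L = n := by
  constructor
  · refine IsLeast.csInf_eq ⟨⟨σ, _, M, hcard, hM⟩, ?_⟩
    rintro _ ⟨τ, _, N, rfl, hN⟩
    exact hle τ N hN
  · refine IsLeast.csInf_eq ⟨⟨σ, _, M, hdet, hcard, hM⟩, ?_⟩
    rintro _ ⟨τ, _, N, -, rfl, hN⟩
    exact hle τ N hN

section Letters

variable (α : Type) [DecidableEq α]

def lettersSeenDFA [Fintype α] : DFA α (Finset α) where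
  step S a := insert a S
  start := ∅
  accept := {Finset.univ}

theorem lettersSeenDFA_evalFrom [Fintype α] (S : Finset α) (w : List α) :
    (lettersSeenDFA α).evalFrom S w = S ∪ w.toFinset := by
  induction w generalizing S with
  | nil => simp
  | cons a w ih =>
    rw [DFA.evalFrom_cons, ih, List.toFinset_cons, Finset.union_insert]
    exact Finset.insert_union a S _

theorem lettersSeenDFA_accepts [Fintype α] :
    (lettersSeenDFA α).accepts = {w | ∀ a : α, a ∈ w} := by
  ext w
  rw [DFA.mem_accepts, DFA.eval, lettersSeenDFA_evalFrom]
  simp [lettersSeenDFA, Finset.eq_univ_iff_forall]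
  rfl

def nodupNFA : NFA α (Finset α) where
  step S a := if a ∈ S then ∅ else {insert a S}
  start := {∅}
  accept := Set.univ

theorem nodupNFA_deterministic : (nodupNFA α).Deterministic := by
  refine ⟨⟨∅, rfl⟩, fun S a => ?_⟩
  by_cases h : a ∈ S <;> simp [nodupNFA, h]

theorem mem_nodupNFA_acceptsFrom_iff {S : Finset α} {w : List α} :
    w ∈ (nodupNFA α).acceptsFrom {S} ↔ w.Nodup ∧ ∀ a ∈ w, a ∉ S := by
  induction w generalizing S with
  | nil => simp [nodupNFA]
  | cons a w ih =>
    rw [NFA.cons_mem_acceptsFrom, NFA.stepSet_singleton]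
    by_cases h : a ∈ S
    · simp [nodupNFA, h, NFA.acceptsFrom_empty]
    · rw [show (nodupNFA α).step S a = {insert a S} from if_neg h, ih]
      simp only [List.nodup_cons, List.mem_cons, Finset.mem_insert]
      grind

theorem nodupNFA_accepts : (nodupNFA α).accepts = {w | w.Nodup} := by
  ext w
  rw [NFA.accepts_eq_acceptsFrom_start, show (nodupNFA α).start = {∅} from rfl,
    mem_nodupNFA_acceptsFrom_iff]
  exact and_iff_left fun a _ => Finset.notMem_empty a

end Letters

section FoolingSets

variable {α : Type} [Fintype α] [DecidableEq α]

theorem forall_mem_compl_toList_append_toList_iff {S T : Finset α} :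
    (∀ a, a ∈ Sᶜ.toList ++ T.toList) ↔ S ⊆ T := by
  simp only [List.mem_append, Finset.mem_toList, Finset.mem_compl, Finset.subset_iff]
  exact forall_congr' fun _ => imp_iff_not_or.symm

theorem nodup_toList_append_compl_toList_iff {S T : Finset α} :
    (S.toList ++ Tᶜ.toList).Nodup ↔ S ⊆ T := by
  simp only [List.nodup_append, Finset.nodup_toList, Finset.mem_toList, Finset.mem_compl,
    true_and]
  exact ⟨fun h a ha => by_contra (h a ha a · rfl), fun h a ha b hb hab => hb (hab ▸ h ha)⟩

end FoolingSets

theorem NFA.two_pow_card_le_of_accepts_eq_setOf_forall_mem {α σ : Type} [Fintype α]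
    [Fintype σ] (M : NFA α σ) (hM : M.accepts = {w | ∀ a : α, a ∈ w}) :
    2 ^ Fintype.card α ≤ Fintype.card σ := by
  classical
  have hL : Language.IsFoolingSet {w | ∀ a : α, a ∈ w} (fun S : Finset α => Sᶜ.toList)
      (fun S => S.toList) :=
    Language.isFoolingSet_of_append_mem_iff_le fun _ _ =>
      forall_mem_compl_toList_append_toList_iff
  simpa using M.card_le_of_isFoolingSet hL hM

theorem NFA.two_pow_card_le_of_accepts_eq_setOf_nodup {α σ : Type} [Fintype α] [Fintype σ]
    (M : NFA α σ) (hM : M.accepts = {w | w.Nodup}) :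
    2 ^ Fintype.card α ≤ Fintype.card σ := by
  classical
  have hL : Language.IsFoolingSet {w | w.Nodup} (fun S : Finset α => S.toList)
      (fun S => Sᶜ.toList) :=
    Language.isFoolingSet_of_append_mem_iff_le fun _ _ => nodup_toList_append_compl_toList_iff
  simpa using M.card_le_of_isFoolingSet hL hM

/-- For a `k`-letter alphabet, the languages `U_Σ` (all letters occur) and `V_Σ`
(no letter occurs twice) satisfy `nN = nD = 2^k`; in particular each is recognized
by a DFA with `2^k` states and every NFA recognizing it has at least `2^k` states. -/
theorem nN_nD_of_U_and_V {α : Type} [Fintype α] (k : ℕ) (hk : Fintype.card α = k)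
    (U V : Language α)
    (hU : U = {x | ∀ a : α, a ∈ x})
    (hV : V = {x | x.Nodup}) :
    nN U = 2 ^ k ∧ nD U = 2 ^ k ∧ nN V = 2 ^ k ∧ nD V = 2 ^ k ∧
    (∀ (σ : Type) [Fintype σ] (M : NFA α σ), M.accepts = U → 2 ^ k ≤ Fintype.card σ) ∧
    (∀ (σ : Type) [Fintype σ] (M : NFA α σ), M.accepts = V → 2 ^ k ≤ Fintype.card σ) := by
  classical
  subst hk hU hV
  have hcard : Fintype.card (Finset α) = 2 ^ Fintype.card α := Fintype.card_finset
  have hU_le (σ : Type) [Fintype σ] (M : NFA α σ) :=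
    M.two_pow_card_le_of_accepts_eq_setOf_forall_mem
  have hV_le (σ : Type) [Fintype σ] (M : NFA α σ) := M.two_pow_card_le_of_accepts_eq_setOf_nodup
  obtain ⟨hNU, hDU⟩ := nN_eq_and_nD_eq_of_deterministic (lettersSeenDFA α).toNFA
    (lettersSeenDFA α).toNFA_deterministic
    ((DFA.toNFA_correct _).trans (lettersSeenDFA_accepts α)) hcard hU_le
  obtain ⟨hNV, hDV⟩ := nN_eq_and_nD_eq_of_deterministic (nodupNFA α)
    (nodupNFA_deterministic α) (nodupNFA_accepts α) hcard hV_le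
  exact ⟨hNU, hDU, hNV, hDV, hU_le, hV_le⟩
end

section
/- Alphabet size needed for tightness of the downward-closure bound: let n > 2 and let L ⊆ Σ* be a regular language accepted by an NFA with n states having a single initial state. If |Σ| < n − 1, then nD(↓L) < 2^{n−1}. -/
/-!
Deleting letters is simulated by closing macro-states under reachability: `↓L(M)` is recognised
by the subset automaton of `M` whose step reads a letter and then adds every state reachable
afterwards. From `S₀ = reach({q₀})` its reachable macro-states are closed subsets of `S₀`, and
`S₀` is the only one containing `q₀`. So the nonempty ones are `S₀` and nonempty subsets of
`{q₀}ᶜ`, fewer than `2^(n-1)` as soon as one nonempty subset of `{q₀}ᶜ` is unreachable.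

If all of them were reachable, each singleton `{q}` with `q ≠ q₀` would be closed, so `q` carries
only self-loops, and `S₀` would be everything. A reachable macro-state avoiding `q₀` is then the
set `G(a)` reached by reading `a` from all states, cut down by the sets `H(b)` of states with a
`b`-self-loop. Hence each co-pair `{q₀, q}ᶜ` is some `G(c)` or `H(c) \ {q₀}`; as
`H(c) ⊆ G(c)`, different `q` need different letters `c`, and `|Σ| ≥ n - 1`.
-/

open Set

theorem Set.ncard_lt_two_pow_of_subset_insert {σ : Type*} [Finite σ] {𝒩 : Set (Set σ)}
    {X T : Set σ} {q₀ : σ} (h𝒩 : 𝒩 ⊆ insert X {S | q₀ ∉ S ∧ S.Nonempty}) (hq₀T : q₀ ∉ T)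
    (hT : T.Nonempty) (hT𝒩 : T ∉ 𝒩) : 𝒩.ncard < 2 ^ (Nat.card σ - 1) := by
  have hsub : 𝒩 ⊆ insert X (𝒫 {q₀}ᶜ \ {∅, T}) := by
    intro S hS
    rcases h𝒩 hS with rfl | ⟨hq₀S, hSne⟩
    · exact mem_insert S _
    · refine mem_insert_of_mem _ ⟨subset_compl_singleton_iff.2 hq₀S, ?_⟩
      rintro (rfl | rfl)
      exacts [hSne.ne_empty rfl, hT𝒩 hS]
  have hpair : {∅, T} ⊆ 𝒫 {q₀}ᶜ := by
    rintro S (rfl | rfl)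
    exacts [empty_subset _, subset_compl_singleton_iff.2 hq₀T]
  have hcount := ncard_sdiff_add_ncard_of_subset hpair
  rw [ncard_pair hT.ne_empty.symm, ncard_powerset, ncard_compl, ncard_singleton] at hcount
  have := (ncard_le_ncard hsub).trans (ncard_insert_le _ _)
  omega

namespace NFA

section

variable {α σ : Type*} (M : NFA α σ)

theorem stepSet_mono {S T : Set σ} (h : S ⊆ T) (a : α) : M.stepSet S a ⊆ M.stepSet T a := by
  rw [← union_eq_right.2 h, stepSet_union]
  exact subset_union_left

theorem evalFrom_mono {S T : Set σ} (h : S ⊆ T) (x : List α) :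
    M.evalFrom S x ⊆ M.evalFrom T x := by
  rw [← union_eq_right.2 h, evalFrom_union]
  exact subset_union_left

def reachClosure (S : Set σ) : Set σ := ⋃ z, M.evalFrom S z

theorem evalFrom_subset_reachClosure (S : Set σ) (z : List α) :
    M.evalFrom S z ⊆ M.reachClosure S :=
  subset_iUnion (M.evalFrom S) z

theorem subset_reachClosure (S : Set σ) : S ⊆ M.reachClosure S :=
  M.evalFrom_subset_reachClosure S []

theorem reachClosure_mono {S T : Set σ} (h : S ⊆ T) : M.reachClosure S ⊆ M.reachClosure T :=
  iUnion_mono fun z => M.evalFrom_mono h z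

@[simp]
theorem reachClosure_empty : M.reachClosure ∅ = ∅ :=
  subset_empty_iff.1 <| iUnion_subset fun _ _ hq => (mem_evalFrom_iff_exists.1 hq).choose_spec.1

theorem evalFrom_reachClosure (S : Set σ) (x : List α) :
    M.evalFrom (M.reachClosure S) x = ⋃ z, M.evalFrom S (z ++ x) := by
  simp [reachClosure]

@[simp]
theorem reachClosure_reachClosure (S : Set σ) :
    M.reachClosure (M.reachClosure S) = M.reachClosure S := by
  refine subset_antisymm (iUnion_subset fun x => ?_) (M.subset_reachClosure _)
  rw [evalFrom_reachClosure]
  exact iUnion_subset fun z => M.evalFrom_subset_reachClosure S (z ++ x)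

theorem reachClosure_eq_self_iff {T : Set σ} :
    M.reachClosure T = T ↔ ∀ a, M.stepSet T a ⊆ T := by
  refine ⟨fun h a => ?_, fun h => subset_antisymm (iUnion_subset fun z => ?_)
    (M.subset_reachClosure T)⟩
  · have := M.evalFrom_subset_reachClosure T [a]
    rwa [h, evalFrom_singleton] at this
  · induction z using List.reverseRecOn with
    | nil => rfl
    | append_singleton z a ih =>
      rw [evalFrom_append, evalFrom_singleton]
      exact (M.stepSet_mono ih a).trans (h a)

def subwordStep (S : Set σ) (a : α) : Set σ := M.reachClosure (M.stepSet S a)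

def subwordEvalFrom (S : Set σ) (x : List α) : Set σ := x.foldl M.subwordStep S

@[simp]
theorem subwordEvalFrom_nil (S : Set σ) : M.subwordEvalFrom S [] = S := rfl

@[simp]
theorem subwordEvalFrom_append_singleton (S : Set σ) (x : List α) (a : α) :
    M.subwordEvalFrom S (x ++ [a]) = M.subwordStep (M.subwordEvalFrom S x) a := by
  simp [subwordEvalFrom]

theorem subwordStep_mono {S T : Set σ} (h : S ⊆ T) (a : α) :
    M.subwordStep S a ⊆ M.subwordStep T a :=
  M.reachClosure_mono (M.stepSet_mono h a)

theorem subwordEvalFrom_mono {S T : Set σ} (h : S ⊆ T) (x : List α) :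
    M.subwordEvalFrom S x ⊆ M.subwordEvalFrom T x := by
  induction x generalizing S T with
  | nil => exact h
  | cons a x ih => exact ih (M.subwordStep_mono h a)

@[simp]
theorem subwordStep_empty (a : α) : M.subwordStep ∅ a = ∅ := by
  simp [subwordStep]

theorem subwordStep_subset_of_reachClosure_eq {S : Set σ} (hS : M.reachClosure S = S) (a : α) :
    M.subwordStep S a ⊆ S :=
  (M.reachClosure_mono ((M.reachClosure_eq_self_iff.1 hS) a)).trans hS.subset

theorem reachClosure_subwordEvalFrom {S : Set σ} (hS : M.reachClosure S = S) (x : List α) :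
    M.reachClosure (M.subwordEvalFrom S x) = M.subwordEvalFrom S x := by
  cases x using List.reverseRecOn with
  | nil => exact hS
  | append_singleton x a => simp [subwordStep]

theorem subwordEvalFrom_subset {S : Set σ} (hS : M.reachClosure S = S) (x : List α) :
    M.subwordEvalFrom S x ⊆ S := by
  induction x generalizing S with
  | nil => rfl
  | cons a x ih =>
    exact (ih (M.reachClosure_reachClosure _)).trans
      (M.subwordStep_subset_of_reachClosure_eq hS a)

theorem reachClosure_evalFrom_subset_subwordEvalFrom {x y : List α} (h : x.Sublist y)
    (S : Set σ) : M.reachClosure (M.evalFrom S y) ⊆ M.subwordEvalFrom (M.reachClosure S) x := by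
  induction h generalizing S with
  | slnil => rfl
  | @cons x y a _ ih =>
    calc M.reachClosure (M.evalFrom S (a :: y))
        ⊆ M.subwordEvalFrom (M.subwordStep S a) x := ih _
      _ ⊆ M.subwordEvalFrom (M.reachClosure S) x :=
        M.subwordEvalFrom_mono ((M.subwordStep_mono (M.subset_reachClosure S) a).trans
          (M.subwordStep_subset_of_reachClosure_eq (M.reachClosure_reachClosure S) a)) x
  | @cons_cons x y a _ ih =>
    exact (ih _).trans
      (M.subwordEvalFrom_mono (M.subwordStep_mono (M.subset_reachClosure S) a) x)

theorem exists_sublist_mem_evalFrom {S : Set σ} {x : List α} {q : σ}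
    (hq : q ∈ M.subwordEvalFrom (M.reachClosure S) x) :
    ∃ y, x.Sublist y ∧ q ∈ M.evalFrom S y := by
  induction x generalizing S with
  | nil => simpa [reachClosure] using hq
  | cons a x ih =>
    obtain ⟨y, hxy, hy⟩ := ih hq
    rw [← evalFrom_singleton, ← evalFrom_append, evalFrom_reachClosure, mem_iUnion] at hy
    obtain ⟨z, hz⟩ := hy
    exact ⟨z ++ a :: y, (hxy.cons_cons a).trans (List.sublist_append_right _ _),
      by simpa using hz⟩

end

theorem downClosure_accepts {α : Type} {σ : Type*} (M : NFA α σ) :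
    downClosure M.accepts =
      {x | (M.subwordEvalFrom (M.reachClosure M.start) x ∩ M.accept).Nonempty} := by
  ext x
  constructor
  · rintro ⟨y, hy, hxy⟩
    obtain ⟨f, hf, hfy⟩ := M.mem_accepts.1 hy
    exact ⟨f, M.reachClosure_evalFrom_subset_subwordEvalFrom hxy _
      (M.subset_reachClosure _ hfy), hf⟩
  · rintro ⟨f, hfx, hf⟩
    obtain ⟨y, hxy, hfy⟩ := M.exists_sublist_mem_evalFrom hfx
    exact ⟨y, M.mem_accepts.2 ⟨f, hf, hfy⟩, hxy⟩

section

variable {α σ : Type*} (M : NFA α σ)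

def subwordReachable (S : Set σ) : Set (Set σ) :=
  range (M.subwordEvalFrom (M.reachClosure S))

theorem reachClosure_eq_of_mem_subwordReachable {S T : Set σ} (hT : T ∈ M.subwordReachable S) :
    M.reachClosure T = T := by
  obtain ⟨x, rfl⟩ := hT
  exact M.reachClosure_subwordEvalFrom (M.reachClosure_reachClosure S) x

theorem subset_of_mem_subwordReachable {S T : Set σ} (hT : T ∈ M.subwordReachable S) :
    T ⊆ M.reachClosure S := by
  obtain ⟨x, rfl⟩ := hT
  exact M.subwordEvalFrom_subset (M.reachClosure_reachClosure S) x

theorem eq_reachClosure_or_notMem_of_mem_subwordReachable {q₀ : σ} {T : Set σ}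
    (hT : T ∈ M.subwordReachable {q₀}) : T = M.reachClosure {q₀} ∨ q₀ ∉ T := by
  refine or_iff_not_imp_right.2 fun hq₀ => subset_antisymm
    (M.subset_of_mem_subwordReachable hT) ?_
  rw [← M.reachClosure_eq_of_mem_subwordReachable hT]
  exact M.reachClosure_mono (singleton_subset_iff.2 (not_not.1 hq₀))

/-- No transition leads to the empty macro-state, which is not a state. -/
def subwordDFA (S : Set σ) : NFA α {T // T ∈ M.subwordReachable S ∧ T.Nonempty} where
  step T a := {T' | T'.1 = M.subwordStep T.1 a}
  start := {T | T.1 = M.reachClosure S}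
  accept := {T | (T.1 ∩ M.accept).Nonempty}

theorem subwordDFA_deterministic {S : Set σ} (hS : S.Nonempty) :
    (M.subwordDFA S).Deterministic := by
  refine ⟨⟨⟨M.reachClosure S, ⟨[], rfl⟩, hS.mono (M.subset_reachClosure S)⟩, ?_⟩,
    fun T a T₁ h₁ T₂ h₂ => Subtype.ext (h₁.trans h₂.symm)⟩
  ext T
  simp [subwordDFA, Subtype.ext_iff]

theorem subwordDFA_evalFrom_start (S : Set σ) (x : List α) :
    (M.subwordDFA S).evalFrom (M.subwordDFA S).start x =
      {T | T.1 = M.subwordEvalFrom (M.reachClosure S) x} := by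
  induction x using List.reverseRecOn with
  | nil => rfl
  | append_singleton x a ih =>
    ext T
    simp only [evalFrom_append, evalFrom_singleton, ih, mem_stepSet, mem_ofPred_eq,
      subwordEvalFrom_append_singleton]
    constructor
    · rintro ⟨T', hT', hT⟩
      rw [hT, ← hT']
    · intro hT
      have hne : (M.subwordEvalFrom (M.reachClosure S) x).Nonempty := by
        by_contra h
        simpa [not_nonempty_iff_eq_empty.1 h, hT] using T.2.2
      exact ⟨⟨_, ⟨x, rfl⟩, hne⟩, rfl, hT⟩

theorem subwordDFA_accepts (S : Set σ) :
    (M.subwordDFA S).accepts =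
      {x | (M.subwordEvalFrom (M.reachClosure S) x ∩ M.accept).Nonempty} := by
  ext x
  simp only [mem_accepts, subwordDFA_evalFrom_start, mem_ofPred_eq]
  constructor
  · rintro ⟨T, hT, hTx⟩
    show (_ ∩ M.accept).Nonempty
    rw [← hTx]
    exact hT
  · intro hx
    exact ⟨⟨_, ⟨x, rfl⟩, hx.mono inter_subset_left⟩, hx, rfl⟩

def selfLoops (a : α) : Set σ := {q | q ∈ M.step q a}

theorem selfLoops_subset_subwordStep_univ (a : α) : M.selfLoops a ⊆ M.subwordStep univ a :=
  fun q hq => M.subset_reachClosure _ (M.mem_stepSet.2 ⟨q, mem_univ q, hq⟩)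

variable {M} {q₀ : σ}

theorem reachClosure_eq_self_of_notMem (hloop : ∀ q ≠ q₀, ∀ a, M.step q a ⊆ {q}) {T : Set σ}
    (hT : q₀ ∉ T) : M.reachClosure T = T :=
  M.reachClosure_eq_self_iff.2 fun a r hr => by
    obtain ⟨p, hp, hpr⟩ := M.mem_stepSet.1 hr
    rwa [hloop p (ne_of_mem_of_not_mem hp hT) a hpr]

theorem subwordStep_eq_inter_selfLoops (hloop : ∀ q ≠ q₀, ∀ a, M.step q a ⊆ {q}) {T : Set σ}
    (hT : q₀ ∉ T) (a : α) : M.subwordStep T a = T ∩ M.selfLoops a := by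
  have hstep : M.stepSet T a = T ∩ M.selfLoops a := by
    ext r
    refine ⟨fun hr => ?_, fun hr => M.mem_stepSet.2 ⟨r, hr⟩⟩
    obtain ⟨p, hp, hpr⟩ := M.mem_stepSet.1 hr
    obtain rfl : r = p := hloop p (ne_of_mem_of_not_mem hp hT) a hpr
    exact ⟨hp, hpr⟩
  rw [subwordStep, hstep, reachClosure_eq_self_of_notMem hloop fun h => hT h.1]

/-- The hypotheses on `x` weaken `M.subwordEvalFrom univ x = {q₀, q}ᶜ` so that they pass to
the prefixes of `x`. -/
theorem exists_letter_of_compl_pair (hloop : ∀ q ≠ q₀, ∀ a, M.step q a ⊆ {q})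
    (huniv : M.reachClosure {q₀} = univ) {q : σ} (x : List α)
    (hsub : {q₀, q}ᶜ ⊆ M.subwordEvalFrom univ x) (hqx : q ∉ M.subwordEvalFrom univ x) :
    ∃ c, M.subwordStep univ c = {q₀, q}ᶜ ∨ M.selfLoops c \ {q₀} = {q₀, q}ᶜ := by
  have eq_univ {T : Set σ} (hT : M.reachClosure T = T) (hq₀ : q₀ ∈ T) : T = univ :=
    eq_univ_of_univ_subset (huniv ▸ hT ▸ M.reachClosure_mono (singleton_subset_iff.2 hq₀))
  have huniv_closed : M.reachClosure (univ : Set σ) = univ := eq_univ_of_univ_subset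
    (M.subset_reachClosure _)
  induction x using List.reverseRecOn with
  | nil => exact absurd (mem_univ q) hqx
  | append_singleton x b ih =>
    rw [subwordEvalFrom_append_singleton] at hsub hqx
    by_cases hq₀x : q₀ ∈ M.subwordEvalFrom univ x
    · rw [eq_univ (M.reachClosure_subwordEvalFrom huniv_closed x) hq₀x] at hsub hqx
      have hq₀b : q₀ ∉ M.subwordStep univ b :=
        fun h => hqx <| by
          rw [eq_univ (T := M.subwordStep univ b) (M.reachClosure_reachClosure _) h]
          exact mem_univ q
      refine ⟨b, Or.inl (subset_antisymm (fun r hr => ?_) hsub)⟩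
      simp only [mem_compl_iff, mem_insert_iff, mem_singleton_iff, not_or]
      exact ⟨ne_of_mem_of_not_mem hr hq₀b, ne_of_mem_of_not_mem hr hqx⟩
    · rw [subwordStep_eq_inter_selfLoops hloop hq₀x] at hsub hqx
      by_cases hqx' : q ∈ M.subwordEvalFrom univ x
      · refine ⟨b, Or.inr (subset_antisymm (fun r hr => ?_) fun r hr => ⟨(hsub hr).2, ?_⟩)⟩
        · simp only [mem_compl_iff, mem_insert_iff, mem_singleton_iff, not_or]
          exact ⟨hr.2, fun hrq => hqx ⟨hqx', hrq ▸ hr.1⟩⟩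
        · exact fun h => hr (Or.inl h)
      · exact ih (hsub.trans inter_subset_left) hqx'

theorem card_sub_one_le_card_of_compl_pairs_reachable
    (hloop : ∀ q ≠ q₀, ∀ a, M.step q a ⊆ {q}) (huniv : M.reachClosure {q₀} = univ)
    [Finite α] [Finite σ]
    (hreach : ∀ q ≠ q₀, {q₀, q}ᶜ ∈ range (M.subwordEvalFrom univ)) :
    Nat.card σ - 1 ≤ Nat.card α := by
  have hletter (q : σ) (hq : q ≠ q₀) :
      ∃ c, M.subwordStep univ c = {q₀, q}ᶜ ∨ M.selfLoops c \ {q₀} = {q₀, q}ᶜ := by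
    obtain ⟨x, hx⟩ := hreach q hq
    exact exists_letter_of_compl_pair hloop huniv x hx.symm.subset (by simp [hx])
  choose c hc using fun q : ({q₀}ᶜ : Set σ) => hletter q q.2
  have compl_pair_subset {q q' : σ} (hq' : q' ≠ q₀) (h : ({q₀, q}ᶜ : Set σ) ⊆ {q₀, q'}ᶜ) :
      q' = q := by
    simpa [hq', insert_subset_iff] using compl_subset_compl.1 h
  -- The two sets a letter can produce are nested, and nested co-pairs coincide.
  have hinj : Function.Injective c := by
    intro q q' hcq
    have hnested : M.selfLoops (c q) \ {q₀} ⊆ M.subwordStep univ (c q) :=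
      sdiff_subset.trans (M.selfLoops_subset_subwordStep_univ (c q))
    refine Subtype.ext ?_
    rcases hc q with h | h <;> rcases hc q' with h' | h' <;> rw [← hcq] at h'
    · exact compl_pair_subset q.2 (h' ▸ h).subset
    · exact compl_pair_subset q.2 (h' ▸ h ▸ hnested)
    · exact (compl_pair_subset q'.2 (h ▸ h' ▸ hnested)).symm
    · exact compl_pair_subset q.2 (h' ▸ h).subset
  have := Nat.card_le_card_of_injective c hinj
  rwa [Nat.card_coe_set_eq, ncard_compl, ncard_singleton] at this

theorem card_sub_one_le_card_of_forall_mem_subwordReachable [Finite α] [Finite σ]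
    (hσ : 2 < Nat.card σ)
    (hall : ∀ T : Set σ, q₀ ∉ T → T.Nonempty → T ∈ M.subwordReachable {q₀}) :
    Nat.card σ - 1 ≤ Nat.card α := by
  have hsingleton (q : σ) (hq : q ≠ q₀) : {q} ∈ M.subwordReachable {q₀} :=
    hall {q} (Ne.symm hq) (singleton_nonempty q)
  have hloop (q : σ) (hq : q ≠ q₀) (a : α) : M.step q a ⊆ {q} := by
    rw [← stepSet_singleton]
    exact M.reachClosure_eq_self_iff.1 (M.reachClosure_eq_of_mem_subwordReachable
      (hsingleton q hq)) a
  have huniv : M.reachClosure {q₀} = univ := by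
    refine eq_univ_of_forall fun q => ?_
    rcases eq_or_ne q q₀ with rfl | hq
    · exact M.subset_reachClosure _ rfl
    · exact M.subset_of_mem_subwordReachable (hsingleton q hq) rfl
  refine card_sub_one_le_card_of_compl_pairs_reachable hloop huniv fun q hq => ?_
  have hne : ({q₀, q}ᶜ : Set σ).Nonempty := by
    rw [nonempty_iff_ne_empty, Ne, ← ncard_eq_zero, ncard_compl]
    have := (ncard_insert_le q₀ {q}).trans_eq (congrArg (· + 1) (ncard_singleton q))
    omega
  simpa [subwordReachable, huniv] using hall _ (by simp) hne

end

end NFA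

theorem nD_downClosure_accepts_le {α σ : Type} [Finite σ] (M : NFA α σ)
    (hM : M.start.Nonempty) :
    nD (downClosure M.accepts) ≤ {T | T ∈ M.subwordReachable M.start ∧ T.Nonempty}.ncard := by
  have := Fintype.ofFinite {T // T ∈ M.subwordReachable M.start ∧ T.Nonempty}
  calc nD (downClosure M.accepts)
      ≤ Fintype.card {T // T ∈ M.subwordReachable M.start ∧ T.Nonempty} :=
        Nat.sInf_le ⟨_, _, M.subwordDFA M.start, M.subwordDFA_deterministic hM, rfl,
          by rw [NFA.subwordDFA_accepts, NFA.downClosure_accepts]⟩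
    _ = _ := Nat.card_eq_fintype_card.symm.trans (Nat.card_coe_set_eq _)

/-- Alphabet size needed for tightness of the downward-closure bound: if `L` is
accepted by an `n`-state NFA (`n > 2`) with a single initial state over an alphabet
with fewer than `n - 1` letters, then `nD(↓L) < 2^(n-1)`. -/
theorem nD_downClosure_lt_of_small_alphabet {α σ : Type} [Fintype α] [Fintype σ]
    (n : ℕ) (hn : 2 < n) (M : NFA α σ) (hcard : Fintype.card σ = n)
    (q₀ : σ) (hstart : M.start = {q₀}) (halph : Fintype.card α < n - 1) :
    nD (downClosure M.accepts) < 2 ^ (n - 1) := by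
  rw [← Nat.card_eq_fintype_card] at hcard halph
  subst hcard
  obtain ⟨T, hq₀T, hT, hTR⟩ :
      ∃ T : Set σ, q₀ ∉ T ∧ T.Nonempty ∧ T ∉ M.subwordReachable {q₀} := by
    by_contra! hall
    have := M.card_sub_one_le_card_of_forall_mem_subwordReachable hn hall
    omega
  calc nD (downClosure M.accepts)
      ≤ {S | S ∈ M.subwordReachable {q₀} ∧ S.Nonempty}.ncard := by
        simpa [hstart] using nD_downClosure_accepts_le M (by simp [hstart])
    _ < 2 ^ (Nat.card σ - 1) := by
      refine ncard_lt_two_pow_of_subset_insert (X := M.reachClosure {q₀}) ?_ hq₀T hT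
        fun h => hTR h.1
      rintro S ⟨hSR, hS⟩
      rcases M.eq_reachClosure_or_notMem_of_mem_subwordReachable hSR with rfl | hq₀S
      exacts [mem_insert _ _, mem_insert_of_mem _ ⟨hq₀S, hS⟩]
end

section
/- Let σ ∈ H* and i ∈ H. The smallest ℓ such that c(σ) is a subword of c(i)^ℓ is θ_i(σ); that is, c(σ) ⊑ c(i)^{θ_i(σ)} and, if θ_i(σ) > 0, c(σ) is not a subword of c(i)^{θ_i(σ)−1}. -/
/-- The word `c(i) = a^i b^(3n-i)` over the binary alphabet `Fin 2`
(`0` is the letter `a`, `1` is the letter `b`). -/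
def cw (n i : ℕ) : List (Fin 2) := List.replicate i 0 ++ List.replicate (3*n - i) 1

/-- The morphism `c : H* → Σ*`, applied to a word `s` over `H ⊆ ℕ`. -/
def cword (n : ℕ) (s : List ℕ) : List (Fin 2) := (s.map (cw n)).flatten

/-- The morphism `d : H* → Σ*`, where `d(i) = c(i)c(i)`. -/
def dword (n : ℕ) (s : List ℕ) : List (Fin 2) := (s.map (fun i => cw n i ++ cw n i)).flatten

/-- The witness language `L_n = { c(i)^n | i ∈ H }` with `H = {n, …, 2n}`. -/
def Lwit (n : ℕ) : Language (Fin 2) :=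
  {w | ∃ i ∈ Finset.Icc n (2*n), w = (List.replicate n (cw n i)).flatten}

/-! The upper bound is blockwise: `c(i)` is one factor of `c(i)^ℓ`, and for `p ≠ i` in `H`
the block `c(p)` embeds in `c(i)c(i)` because `p ≤ 2i` and `3n - p ≤ 2(3n - i)`. For the lower
bound, embed `c(σ)` greedily: each block ends in `b` and the next one starts with `a`, so the
letters of a block can be pushed into the leftmost factors still available, and a block
`c(p)` with `p ≠ i` has more `a`s or more `b`s than `c(i)`, hence consumes two factors. -/

open List

section Blocks

variable {α : Type*}

theorem replicate_append_sublist_replicate_append {c : α} {m k : ℕ} {x y : List α}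
    (hx : x.head? ≠ some c) (h : replicate m c ++ x <+ replicate k c ++ y) :
    replicate (m - k) c ++ x <+ y := by
  induction k generalizing m with
  | zero => simpa using h
  | succ k ih =>
    rw [replicate_succ, cons_append] at h
    cases m with
    | zero =>
      rcases sublist_cons_iff.mp h with h | ⟨r, rfl, -⟩
      · simpa using ih h
      · simp at hx
    | succ m =>
      rw [replicate_succ, cons_append, cons_sublist_cons] at h
      simpa using ih h

theorem head?_replicate_append_of_pos {a : α} {m : ℕ} (hm : 0 < m) (l : List α) :
    (replicate m a ++ l).head? = some a := by
  obtain ⟨m, rfl⟩ := Nat.exists_eq_add_of_lt hm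
  rfl

def block (a b : α) (p q : ℕ) : List α := replicate p a ++ replicate q b

variable {a b : α} {p q i j : ℕ} {y Z : List α}

theorem sublist_of_block_append_sublist_of_le (hab : a ≠ b) (hq : 0 < q)
    (hy : y.head? ≠ some b) (hpi : p ≤ i) (h : block a b p q ++ y <+ block a b i j ++ Z) :
    replicate (q - j) b ++ y <+ Z := by
  simp only [block, append_assoc] at h
  have h := replicate_append_sublist_replicate_append
    (by simpa [head?_replicate_append_of_pos hq] using hab.symm) h
  rw [Nat.sub_eq_zero_of_le hpi, replicate_zero, nil_append] at h
  exact replicate_append_sublist_replicate_append hy h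

theorem sublist_of_block_append_sublist_of_lt (hab : a ≠ b) (hq : 0 < q) (hip : i < p)
    (h : block a b p q ++ y <+ block a b i j ++ Z) :
    block a b (p - i) q ++ y <+ Z := by
  simp only [block, append_assoc] at h ⊢
  have h := replicate_append_sublist_replicate_append
    (by simpa [head?_replicate_append_of_pos hq] using hab.symm) h
  simpa using replicate_append_sublist_replicate_append (m := 0)
    (by simpa [head?_replicate_append_of_pos (Nat.sub_pos_of_lt hip)] using hab) h

theorem sublist_of_block_append_sublist_block_append (hab : a ≠ b) (hq : 0 < q)
    (hy : y.head? ≠ some b) (hpi : p ≤ i) (hqj : q ≤ j)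
    (h : block a b p q ++ y <+ block a b i j ++ Z) : y <+ Z := by
  simpa [Nat.sub_eq_zero_of_le hqj] using
    sublist_of_block_append_sublist_of_le hab hq hy hpi h

theorem exists_sublist_of_block_append_sublist_flatten_replicate (hab : a ≠ b) (hq : 0 < q)
    (hy : y.head? ≠ some b) (hpi : p ≤ i) (hqj : q ≤ j) {t : ℕ}
    (h : block a b p q ++ y <+ (replicate t (block a b i j)).flatten) :
    ∃ t', t = t' + 1 ∧ y <+ (replicate t' (block a b i j)).flatten := by
  cases t with
  | zero => simp [block] at h; omega
  | succ t =>
    rw [replicate_succ, flatten_cons] at h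
    exact ⟨t, rfl, sublist_of_block_append_sublist_block_append hab hq hy hpi hqj h⟩

theorem exists_sublist_of_block_append_sublist_block_append (hab : a ≠ b) (hq : 0 < q)
    (hy : y.head? ≠ some b) (hpi : p ≠ i) (hsum : p + q = i + j) (hp : p ≤ 2 * i)
    (hq' : q ≤ 2 * j) (h : block a b p q ++ y <+ block a b i j ++ Z) :
    ∃ p' q', p' ≤ i ∧ q' ≤ j ∧ 0 < q' ∧ block a b p' q' ++ y <+ Z := by
  rcases lt_or_gt_of_ne hpi with hlt | hgt
  · exact ⟨0, q - j, by omega, by omega, by omega,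
      by simpa [block] using sublist_of_block_append_sublist_of_le hab hq hy hlt.le h⟩
  · exact ⟨p - i, q, by omega, by omega, hq,
      sublist_of_block_append_sublist_of_lt hab hq hgt h⟩

theorem block_sublist_block_append_block [DecidableEq α] (hab : a ≠ b)
    (hsum : p + q = i + j) (hp : p ≤ 2 * i) (hq : q ≤ 2 * j) :
    block a b p q <+ block a b i j ++ block a b i j := by
  simp only [block, append_assoc]
  rcases le_or_gt p i with hpi | hip
  · refine (replicate_sublist_replicate a |>.mpr hpi).append ?_
    rw [replicate_sublist_iff]
    simp [count_replicate, hab]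
    omega
  · rw [← append_assoc, ← append_assoc]
    refine .append ?_ (replicate_sublist_replicate b |>.mpr (by omega))
    rw [replicate_sublist_iff]
    simp [count_replicate, hab.symm]
    omega

end Blocks

section Theta

variable {n i : ℕ} {s : List ℕ}

theorem cw_eq_block (n i : ℕ) : cw n i = block 0 1 i (3 * n - i) := rfl

theorem cword_cons (n p : ℕ) (s : List ℕ) : cword n (p :: s) = cw n p ++ cword n s := rfl

theorem head?_cword_ne_one (hs : ∀ p ∈ s, 0 < p) : (cword n s).head? ≠ some 1 := by
  cases s with
  | nil => simp [cword]
  | cons p s =>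
    rw [cword_cons, cw, append_assoc,
      head?_replicate_append_of_pos (hs p mem_cons_self)]
    decide

def theta (i : ℕ) (s : List ℕ) : ℕ := 2 * s.length - s.count i

theorem theta_cons (i p : ℕ) (s : List ℕ) :
    theta i (p :: s) = (if p = i then 1 else 2) + theta i s := by
  have := s.count_le_length (a := i)
  split_ifs with hpi <;> simp [theta, hpi] <;> omega

theorem cw_sublist_flatten_replicate (hi : i ∈ Finset.Icc n (2 * n)) {p : ℕ}
    (hp : p ∈ Finset.Icc n (2 * n)) :
    cw n p <+ (replicate (if p = i then 1 else 2) (cw n i)).flatten := by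
  simp only [Finset.mem_Icc] at hi hp
  split_ifs with hpi
  · simp [hpi]
  · simpa [cw_eq_block] using
      block_sublist_block_append_block (p := p) (q := 3 * n - p) (i := i) (j := 3 * n - i)
        (by decide) (by omega) (by omega) (by omega)

theorem cword_sublist_flatten_replicate_theta (hi : i ∈ Finset.Icc n (2 * n))
    (hs : ∀ p ∈ s, p ∈ Finset.Icc n (2 * n)) :
    cword n s <+ (replicate (theta i s) (cw n i)).flatten := by
  induction s with
  | nil => simp [cword]
  | cons p s ih =>
    rw [cword_cons, theta_cons, replicate_add, flatten_append]
    exact (cw_sublist_flatten_replicate hi (hs p mem_cons_self)).append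
      (ih fun q hq => hs q (mem_cons_of_mem p hq))

theorem exists_sublist_of_cw_append_sublist (hn : 1 ≤ n) (hi : i ∈ Finset.Icc n (2 * n))
    {p t : ℕ} (hp : p ∈ Finset.Icc n (2 * n)) {y : List (Fin 2)} (hy : y.head? ≠ some 1)
    (h : cw n p ++ y <+ (replicate t (cw n i)).flatten) :
    ∃ t', t = (if p = i then 1 else 2) + t' ∧ y <+ (replicate t' (cw n i)).flatten := by
  simp only [Finset.mem_Icc] at hi hp
  have hq : 0 < 3 * n - p := by omega
  have h01 : (0 : Fin 2) ≠ 1 := by decide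
  rw [cw_eq_block] at h ⊢
  split_ifs with hpi
  · subst hpi
    obtain ⟨t', rfl, h'⟩ :=
      exists_sublist_of_block_append_sublist_flatten_replicate h01 hq hy le_rfl le_rfl h
    exact ⟨t', by omega, h'⟩
  cases t with
  | zero => simp [block] at h; omega
  | succ t =>
    rw [replicate_succ, flatten_cons] at h
    obtain ⟨p', q', hp', hq', hq'0, h⟩ := exists_sublist_of_block_append_sublist_block_append
      h01 hq hy hpi (by omega) (by omega) (by omega) h
    obtain ⟨t', rfl, h'⟩ :=
      exists_sublist_of_block_append_sublist_flatten_replicate h01 hq'0 hy hp' hq' h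
    exact ⟨t', by omega, h'⟩

theorem theta_le_of_cword_sublist (hn : 1 ≤ n) (hi : i ∈ Finset.Icc n (2 * n))
    (hs : ∀ p ∈ s, p ∈ Finset.Icc n (2 * n)) {t : ℕ}
    (h : cword n s <+ (replicate t (cw n i)).flatten) : theta i s ≤ t := by
  induction s generalizing t with
  | nil => simp [theta]
  | cons p s ih =>
    have hs' : ∀ q ∈ s, q ∈ Finset.Icc n (2 * n) := fun q hq => hs q (mem_cons_of_mem p hq)
    have hpos : ∀ q ∈ s, 0 < q := fun q hq => by have := Finset.mem_Icc.mp (hs' q hq); omega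
    obtain ⟨t', rfl, h'⟩ := exists_sublist_of_cw_append_sublist hn hi (hs p mem_cons_self)
      (head?_cword_ne_one hpos) h
    rw [theta_cons]
    exact Nat.add_le_add_left (ih hs' h') _

end Theta

/-- For `σ ∈ H*` and `i ∈ H`, the smallest `ℓ` such that `c(σ)` is a subword of
`c(i)^ℓ` is `θ_i(σ) = 2|σ| - (number of occurrences of i in σ)`: `c(σ)` embeds in
`c(i)^(θ_i(σ))` and, if `θ_i(σ) > 0`, not in `c(i)^(θ_i(σ) - 1)`. -/
theorem subword_of_power_iff_theta (n : ℕ) (hn : 1 ≤ n)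
    (i : ℕ) (hi : i ∈ Finset.Icc n (2 * n))
    (s : List ℕ) (hs : ∀ p ∈ s, p ∈ Finset.Icc n (2 * n)) :
    (cword n s).Sublist (List.replicate (2 * s.length - s.count i) (cw n i)).flatten ∧
    (0 < 2 * s.length - s.count i →
      ¬ (cword n s).Sublist
          (List.replicate (2 * s.length - s.count i - 1) (cw n i)).flatten) := by
  refine ⟨cword_sublist_flatten_replicate_theta hi hs, fun hpos hsub => ?_⟩
  exact (Nat.sub_lt hpos one_pos).not_ge (theta_le_of_cword_sublist hn hi hs hsub)
end

section
/- Let σ ∈ H* and i ∈ H. The longest prefix of the infinite word c(i)^ω that is a subword of d(σ) is c(i)^{η_i(σ)}; that is, c(i)^{η_i(σ)} ⊑ d(σ) while c(i)^{η_i(σ)}·a is not a subword of d(σ). -/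
/-!
`d(σ)` is the concatenation of the blocks `c(p)c(p)`, `p ∈ σ`, and the prefix of `c(i)^ω` is
embedded greedily, block by block. The block `c(i)c(i)` takes in exactly `c(i)^2` and every other
block `c(p)c(p)` exactly `c(i)`: the next letter, an `a`, does not fit. Since every prefix of
`c(i)^ω` that extends a power of `c(i)` continues with `a`, that letter is pushed into the later
blocks, so the exponents add up to `η_i(σ)`.
-/

namespace List

variable {α : Type*}

theorem append_cons_sublist_append {x z w y : List α} {c : α} (h : x ++ c :: z <+ w ++ y) :
    x ++ [c] <+ w ∨ c :: z <+ y := by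
  obtain ⟨l₁, l₂, hsplit, h₁, h₂⟩ := sublist_append_iff.mp h
  rcases append_eq_append_iff.mp hsplit with ⟨_ | ⟨c', rest⟩, rfl, hcz⟩ | ⟨rest, rfl, rfl⟩
  · rw [nil_append] at hcz
    exact .inr (hcz ▸ h₂)
  · obtain ⟨rfl, rfl⟩ := cons_eq_cons.mp hcz
    exact .inl ((by simp : x ++ [c] <+ x ++ c :: rest).trans h₁)
  · exact .inr ((sublist_append_right rest _).trans h₂)

theorem flatten_replicate_append_singleton_eq_cons {u : List α} {a : α} (hu : u.head? = some a)
    (m : ℕ) : ∃ z, (replicate m u).flatten ++ [a] = a :: z := by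
  obtain ⟨u', rfl⟩ := head?_eq_some_iff.mp hu
  cases m with
  | zero => exact ⟨[], rfl⟩
  | succ m => exact ⟨u' ++ (replicate m (a :: u')).flatten ++ [a], by simp [replicate_succ]⟩

theorem sum_map_ite_eq_length_add_count [DecidableEq α] (i : α) (s : List α) :
    (s.map fun p => if p = i then 2 else 1).sum = s.length + s.count i := by
  induction s with
  | nil => rfl
  | cons p s ih =>
    by_cases h : p = i <;> simp [h, ih] <;> omega

variable {β : Type*} {f : β → List α} {g : β → ℕ} {u : List α}

theorem flatten_replicate_sum_sublist_flatten_map (s : List β)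
    (h : ∀ p ∈ s, (replicate (g p) u).flatten <+ f p) :
    (replicate (s.map g).sum u).flatten <+ (s.map f).flatten := by
  induction s with
  | nil => simp
  | cons p s ih =>
    simp only [map_cons, sum_cons, replicate_add, flatten_append, flatten_cons]
    exact (h p mem_cons_self).append (ih fun q hq => h q (mem_cons_of_mem p hq))

theorem not_flatten_replicate_sum_append_sublist_flatten_map {a : α} (hu : u.head? = some a)
    (s : List β) (h : ∀ p ∈ s, ¬ (replicate (g p) u).flatten ++ [a] <+ f p) :
    ¬ (replicate (s.map g).sum u).flatten ++ [a] <+ (s.map f).flatten := by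
  induction s with
  | nil => simp
  | cons p s ih =>
    obtain ⟨z, hz⟩ := flatten_replicate_append_singleton_eq_cons hu (s.map g).sum
    simp only [map_cons, sum_cons, replicate_add, flatten_append, flatten_cons, append_assoc, hz]
    intro hsub
    rcases append_cons_sublist_append hsub with hp | hs
    · exact h p mem_cons_self hp
    · exact ih (fun q hq => h q (mem_cons_of_mem p hq)) (hz ▸ hs)

end List

open List

theorem length_cw {n i : ℕ} (hi : i ≤ 3 * n) : (cw n i).length = 3 * n := by
  simp only [cw, length_append, length_replicate]; omega

theorem count_zero_cw (n i : ℕ) : (cw n i).count 0 = i := by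
  simp [cw, count_replicate]

theorem head?_cw {n i : ℕ} (hi : 1 ≤ i) : (cw n i).head? = some 0 := by
  obtain ⟨i, rfl⟩ := Nat.exists_eq_add_of_le' hi
  simp [cw, replicate_succ]

theorem cw_sublist_cw_append_cw {n i p : ℕ} (hi : i ∈ Finset.Icc n (2 * n))
    (hp : p ∈ Finset.Icc n (2 * n)) : cw n i <+ cw n p ++ cw n p := by
  rw [Finset.mem_Icc] at hi hp
  rcases le_total i p with hip | hpi
  · rw [cw, cw, append_assoc]
    refine ((replicate_sublist_replicate 0).mpr hip).append (replicate_sublist_iff.mpr ?_)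
    simp only [count_append, count_replicate_self]; omega
  · rw [cw, cw, ← append_assoc]
    refine (replicate_sublist_iff.mpr ?_).append ((replicate_sublist_replicate (1 : Fin 2)).mpr ?_)
    · simp only [count_append, count_replicate_self]; omega
    · omega

/-- The last letter `b` of `c(i)` can only be followed by an `a` in the second copy of `c(p)`, so
`c(i)` must embed into the first copy, which has the same length. -/
theorem not_cw_append_sublist_cw_append_cw {n i p : ℕ} (hi : i < 3 * n) (hp : p ≤ 3 * n)
    (hne : i ≠ p) : ¬ cw n i ++ [0] <+ cw n p ++ cw n p := by
  obtain ⟨r, hr⟩ : ∃ r, 3 * n - i = r + 1 := ⟨3 * n - i - 1, by omega⟩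
  have hcw : cw n i = (replicate i 0 ++ replicate r 1) ++ [1] := by
    simp [cw, hr, replicate_succ']
  rw [hcw, append_assoc]
  intro h
  rcases append_cons_sublist_append h with hcwp | hba
  · have heq := hcwp.eq_of_length (by rw [← hcw, length_cw hi.le, length_cw hp])
    rw [← count_zero_cw n i, hcw, heq, count_zero_cw] at hne
    exact hne rfl
  · rw [cw] at hba
    rcases append_cons_sublist_append (x := []) hba with hb | ha
    · simp at hb
    · simpa using ha.subset (mem_cons_of_mem 1 mem_cons_self)

theorem flatten_replicate_cw_sublist_cw_append_cw {n i p : ℕ} (hi : i ∈ Finset.Icc n (2 * n))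
    (hp : p ∈ Finset.Icc n (2 * n)) :
    (replicate (if p = i then 2 else 1) (cw n i)).flatten <+ cw n p ++ cw n p := by
  split_ifs with h
  · simp [h]
  · simpa using cw_sublist_cw_append_cw hi hp

theorem not_flatten_replicate_cw_append_sublist_cw_append_cw {n i p : ℕ} (hi : i < 3 * n)
    (hp : p ≤ 3 * n) :
    ¬ (replicate (if p = i then 2 else 1) (cw n i)).flatten ++ [0] <+ cw n p ++ cw n p := by
  split_ifs with h
  · intro hsub
    have := hsub.length_le
    simp [h, length_cw hi.le] at this
  · simpa using not_cw_append_sublist_cw_append_cw hi hp (Ne.symm h)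

/-- For `σ ∈ H*` and `i ∈ H`, the longest prefix of `c(i)^ω` that is a subword of
`d(σ)` is `c(i)^(η_i(σ))`, where `η_i(σ) = |σ| + (number of occurrences of i in σ)`:
`c(i)^(η_i(σ))` embeds in `d(σ)` while `c(i)^(η_i(σ))·a` does not. -/
theorem prefix_of_power_in_dword (n : ℕ) (hn : 1 ≤ n)
    (i : ℕ) (hi : i ∈ Finset.Icc n (2 * n))
    (s : List ℕ) (hs : ∀ p ∈ s, p ∈ Finset.Icc n (2 * n)) :
    ((List.replicate (s.length + s.count i) (cw n i)).flatten).Sublist (dword n s) ∧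
    ¬ ((List.replicate (s.length + s.count i) (cw n i)).flatten
        ++ [(0 : Fin 2)]).Sublist (dword n s) := by
  have hi_bounds := Finset.mem_Icc.mp hi
  rw [← sum_map_ite_eq_length_add_count, dword]
  refine ⟨flatten_replicate_sum_sublist_flatten_map s fun p hp =>
      flatten_replicate_cw_sublist_cw_append_cw hi (hs p hp),
    not_flatten_replicate_sum_append_sublist_flatten_map (head?_cw (by omega)) s fun p hp =>
      not_flatten_replicate_cw_append_sublist_cw_append_cw (by omega) ?_⟩
  have hp_bounds := Finset.mem_Icc.mp (hs p hp)
  omega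
end
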